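/- Let f : [a,b] → ℝ (a < b) be such that f′ is absolutely continuous on [a,b], f″ ∈ L¹[a,b], and |f″|^q is s-convex in the second sense on [a,b] for some fixed s ∈ (0,1], where q > 1 and 1/p + 1/q = 1. If x ∈ [a, (a+b)/2] satisfies f′(x) = f′(a+b−x), then |(1/(b−a))∫_a^b f(t) dt − (1/2)[f(x)+f(a+b−x)]| ≤ (1/(2(b−a)(2p+1)^{1/p}(s+1)^{1/q}))[(x−a)³(|f″(a)|^q + |f″(x)|^q)^{1/q} + ((a+b−2x)³/4)(|f″(x)|^q + |f″(a+b−x)|^q)^{1/q} + (x−a)³(|f″(a+b−x)|^q + |f″(b)|^q)^{1/q}]. -/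

import Mathlib

/-!
Split `[a, b]` at `x` and `a + b - x` and take the kernel equal to `(t - a)² / 2`,
`(t - (a + b) / 2)² / 2` and `(t - b)² / 2` on the three pieces. Integrating by parts twice, the
kernel against `f''` gives `∫ f - (b - a) / 2 * (f x + f (a + b - x))`: the boundary terms in `f'`
cancel exactly because `f' x = f' (a + b - x)`. On each piece Hölder's inequality bounds the
integral by the `L^p` norm of the kernel, computed explicitly, times the `L^q` norm of `f''`, and
`∫ |f''| ^ q` is bounded by the Hermite–Hadamard inequality for `s`-convex functions,
`∫ t in c..d, g t ≤ (d - c) * (g c + g d) / (s + 1)`.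
-/

open MeasureTheory

def SConvexOn (s : ℝ) (D : Set ℝ) (g : ℝ → ℝ) : Prop :=
  ∀ x ∈ D, ∀ y ∈ D, ∀ α β : ℝ, 0 ≤ α → 0 ≤ β → α + β = 1 →
    g (α * x + β * y) ≤ α ^ s * g x + β ^ s * g y

open Set intervalIntegral

namespace SConvexOn

variable {s c d : ℝ} {D : Set ℝ} {g : ℝ → ℝ}

theorem subset {D' : Set ℝ} (hg : SConvexOn s D g) (h : D' ⊆ D) : SConvexOn s D' g :=
  fun x hx y hy => hg x (h hx) y (h hy)

theorem le_of_mem_Icc (hg : SConvexOn s (Icc c d) g) (hcd : c < d) {t : ℝ} (ht : t ∈ Icc c d) :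
    g t ≤ ((d - t) / (d - c)) ^ s * g c + ((t - c) / (d - c)) ^ s * g d := by
  have hdc : 0 < d - c := sub_pos.2 hcd
  have h := hg c (left_mem_Icc.2 hcd.le) d (right_mem_Icc.2 hcd.le) ((d - t) / (d - c))
    ((t - c) / (d - c)) (div_nonneg (by linarith [ht.2]) hdc.le)
    (div_nonneg (by linarith [ht.1]) hdc.le) (by field_simp; ring)
  rwa [show (d - t) / (d - c) * c + (t - c) / (d - c) * d = t by field_simp; ring] at h

theorem le_add_of_mem_Icc (hg : SConvexOn s (Icc c d) g) (hs : 0 ≤ s) (hc : 0 ≤ g c)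
    (hd : 0 ≤ g d) {t : ℝ} (ht : t ∈ Icc c d) : g t ≤ g c + g d := by
  rcases (ht.1.trans ht.2).eq_or_lt with rfl | hcd
  · rw [le_antisymm ht.2 ht.1]; linarith
  have hdc : 0 < d - c := sub_pos.2 hcd
  have weight_le_one : ∀ u, 0 ≤ u → u ≤ d - c → (u / (d - c)) ^ s ≤ 1 := fun u hu hu' =>
    Real.rpow_le_one (div_nonneg hu hdc.le) ((div_le_one hdc).2 hu') hs
  have h1 := weight_le_one (d - t) (by linarith [ht.2]) (by linarith [ht.1])
  have h2 := weight_le_one (t - c) (by linarith [ht.1]) (by linarith [ht.2])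
  calc g t ≤ _ := hg.le_of_mem_Icc hcd ht
    _ ≤ 1 * g c + 1 * g d := by gcongr
    _ = g c + g d := by ring

theorem integral_rpow_div_sub (hs : 0 ≤ s) (hcd : c < d) :
    ∫ t in c..d, ((t - c) / (d - c)) ^ s = (d - c) / (s + 1) := by
  have hdc : 0 < d - c := sub_pos.2 hcd
  rw [integral_congr (g := fun t => (t - c) ^ s / (d - c) ^ s) fun t ht =>
      Real.div_rpow (by linarith [(uIcc_of_le hcd.le ▸ ht).1]) hdc.le s,
    intervalIntegral.integral_div, integral_comp_sub_right (fun u => u ^ s), sub_self,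
    integral_rpow (Or.inl (by linarith)), Real.zero_rpow (by linarith), sub_zero,
    Real.rpow_add_one hdc.ne']
  field_simp

theorem integral_le (hg : SConvexOn s (Icc c d) g) (hs : 0 ≤ s) (hcd : c ≤ d)
    (hint : IntervalIntegrable g volume c d) :
    ∫ t in c..d, g t ≤ (d - c) * (g c + g d) / (s + 1) := by
  rcases hcd.eq_or_lt with rfl | hcd
  · simp
  have hw : Continuous fun t => ((t - c) / (d - c)) ^ s := by fun_prop
  have hw' : Continuous fun t => ((d - t) / (d - c)) ^ s := by fun_prop
  have hmirror : ∫ t in c..d, ((d - t) / (d - c)) ^ s = (d - c) / (s + 1) := by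
    rw [← integral_rpow_div_sub hs hcd]
    convert integral_comp_sub_left (a := c) (b := d) (fun t => ((t - c) / (d - c)) ^ s) (c + d)
      using 4 <;> ring
  have hi : IntervalIntegrable (fun t => ((d - t) / (d - c)) ^ s * g c) volume c d :=
    (hw'.mul continuous_const).intervalIntegrable _ _
  have hi' : IntervalIntegrable (fun t => ((t - c) / (d - c)) ^ s * g d) volume c d :=
    (hw.mul continuous_const).intervalIntegrable _ _
  calc ∫ t in c..d, g t
      ≤ ∫ t in c..d, ((d - t) / (d - c)) ^ s * g c + ((t - c) / (d - c)) ^ s * g d :=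
        integral_mono_on hcd.le hint (hi.add hi') fun t ht => hg.le_of_mem_Icc hcd ht
    _ = (d - c) * (g c + g d) / (s + 1) := by
        rw [integral_add hi hi', intervalIntegral.integral_mul_const,
          intervalIntegral.integral_mul_const, hmirror,
          integral_rpow_div_sub hs hcd]
        ring

theorem intervalIntegrable (hg : SConvexOn s (Icc c d) g) (hs : 0 ≤ s) (hg0 : ∀ t, 0 ≤ g t)
    (hcd : c ≤ d)
    (hm : AEStronglyMeasurable g (volume.restrict (Ioc c d))) :
    IntervalIntegrable g volume c d := by
  rw [intervalIntegrable_iff_integrableOn_Ioc_of_le hcd]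
  refine Integrable.mono' (g := fun _ => g c + g d) (integrableOn_const measure_Ioc_lt_top.ne) hm ?_
  filter_upwards [ae_restrict_mem measurableSet_Ioc] with t ht
  rw [Real.norm_eq_abs, abs_of_nonneg (hg0 t)]
  exact hg.le_add_of_mem_Icc hs (hg0 c) (hg0 d) (Ioc_subset_Icc_self ht)

end SConvexOn

theorem intervalIntegral.integral_mul_le_Lp_mul_Lq_of_nonneg {p q c d : ℝ}
    (hpq : p.HolderConjugate q) (hcd : c ≤ d) {f g : ℝ → ℝ} (hf0 : ∀ t, 0 ≤ f t)
    (hg0 : ∀ t, 0 ≤ g t) (hf : IntervalIntegrable (fun t => f t ^ p) volume c d)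
    (hg : IntervalIntegrable (fun t => g t ^ q) volume c d) :
    ∫ t in c..d, f t * g t
      ≤ (∫ t in c..d, f t ^ p) ^ (1 / p) * (∫ t in c..d, g t ^ q) ^ (1 / q) := by
  have memLp : ∀ {h : ℝ → ℝ} {r : ℝ}, 0 < r → (∀ t, 0 ≤ h t) →
      IntervalIntegrable (fun t => h t ^ r) volume c d →
      MemLp h (ENNReal.ofReal r) (volume.restrict (Ioc c d)) := by
    intro h r hr h0 hi
    have hi := (intervalIntegrable_iff_integrableOn_Ioc_of_le hcd).1 hi
    -- `h` is measurable because it is the `r`-th root of the integrable function `h ^ r`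
    have hm : AEStronglyMeasurable h (volume.restrict (Ioc c d)) :=
      ((Real.continuous_rpow_const (inv_nonneg.2 hr.le)).comp_aestronglyMeasurable
        hi.aestronglyMeasurable).congr (ae_of_all _ fun t => Real.rpow_rpow_inv (h0 t) hr.ne')
    rw [← integrable_norm_rpow_iff hm (by simpa using hr) ENNReal.ofReal_ne_top,
      ENNReal.toReal_ofReal hr.le]
    simpa only [Real.norm_eq_abs, abs_of_nonneg (h0 _)] using hi.integrable
  simp only [integral_of_le hcd]
  exact MeasureTheory.integral_mul_le_Lp_mul_Lq_of_nonneg hpq (ae_of_all _ hf0) (ae_of_all _ hg0)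
    (memLp hpq.pos hf0 hf) (memLp hpq.symm.pos hg0 hg)

theorem Real.HolderConjugate.mul_rpow_div_rpow_mul {p q ℓ M P A B : ℝ}
    (hpq : p.HolderConjugate q) (hℓ : 0 ≤ ℓ) (hM : 0 ≤ M) (hP : 0 ≤ P) (hA : 0 ≤ A)
    (hB : 0 ≤ B) :
    (ℓ * M ^ p / A) ^ (1 / p) * (ℓ * P / B) ^ (1 / q)
      = ℓ * M * P ^ (1 / q) / (A ^ (1 / p) * B ^ (1 / q)) := by
  have hsum : 1 / p + 1 / q = 1 := by simpa [one_div] using hpq.inv_add_inv_eq_one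
  have hℓ' : ℓ ^ (1 / p) * ℓ ^ (1 / q) = ℓ := by
    rw [← Real.rpow_add' hℓ (by rw [hsum]; norm_num), hsum, Real.rpow_one]
  rw [Real.div_rpow (by positivity) hA, Real.div_rpow (by positivity) hB,
    Real.mul_rpow hℓ (by positivity), Real.mul_rpow hℓ hP, ← Real.rpow_mul hM,
    mul_one_div_cancel hpq.ne_zero, Real.rpow_one]
  calc _ = ℓ ^ (1 / p) * ℓ ^ (1 / q) * M * P ^ (1 / q) / (A ^ (1 / p) * B ^ (1 / q)) := by ring
    _ = _ := by rw [hℓ']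

theorem integral_sq_div_two_rpow {p r : ℝ} (hp : 0 ≤ p) (hr : 0 ≤ r) :
    ∫ u in (0 : ℝ)..r, (u ^ 2 / 2) ^ p = r * (r ^ 2 / 2) ^ p / (2 * p + 1) := by
  have hpow : ∀ u : ℝ, 0 ≤ u → (u ^ 2 / 2) ^ p = u ^ (2 * p) / 2 ^ p := fun u hu => by
    rw [Real.div_rpow (sq_nonneg u) zero_le_two, ← Real.rpow_natCast u 2, ← Real.rpow_mul hu]
    norm_num
  rw [integral_congr fun u hu => hpow u (uIcc_of_le hr ▸ hu).1, intervalIntegral.integral_div,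
    integral_rpow (Or.inl (by linarith)), Real.zero_rpow (by linarith), sub_zero,
    Real.rpow_add' hr (by linarith), Real.rpow_one, hpow r hr]
  ring

theorem integral_sub_sq_div_two_rpow {p c d e : ℝ} (hp : 0 ≤ p) (hce : c ≤ e) (hed : e ≤ d) :
    ∫ t in c..d, ((t - e) ^ 2 / 2) ^ p
      = ((e - c) * ((e - c) ^ 2 / 2) ^ p + (d - e) * ((d - e) ^ 2 / 2) ^ p) / (2 * p + 1) := by
  have hK : Continuous fun t : ℝ => ((t - e) ^ 2 / 2) ^ p := by fun_prop
  have hleft : ∫ t in c..e, ((t - e) ^ 2 / 2) ^ p = ∫ u in (0 : ℝ)..(e - c), (u ^ 2 / 2) ^ p := by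
    simp_rw [fun t => (by ring : (t - e) ^ 2 = (e - t) ^ 2)]
    rw [integral_comp_sub_left (fun u => (u ^ 2 / 2) ^ p) e, sub_self]
  rw [← integral_add_adjacent_intervals (hK.intervalIntegrable c e) (hK.intervalIntegrable e d),
    hleft, integral_comp_sub_right (fun u => (u ^ 2 / 2) ^ p), sub_self,
    integral_sq_div_two_rpow hp (sub_nonneg.2 hce), integral_sq_div_two_rpow hp (sub_nonneg.2 hed)]
  ring

theorem integral_sub_sq_div_two_mul_eq {c d e : ℝ} {f f' f'' : ℝ → ℝ}
    (hf' : ∀ t ∈ uIcc c d, HasDerivAt f (f' t) t)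
    (hf'' : ∀ t ∈ uIcc c d, HasDerivAt f' (f'' t) t)
    (hint : IntervalIntegrable f'' volume c d) :
    ∫ t in c..d, (t - e) ^ 2 / 2 * f'' t
      = (d - e) ^ 2 / 2 * f' d - (c - e) ^ 2 / 2 * f' c
        - ((d - e) * f d - (c - e) * f c) + ∫ t in c..d, f t := by
  have hK : ∀ t ∈ uIcc c d, HasDerivAt (fun t => (t - e) ^ 2 / 2) (t - e) t := fun t _ => by
    simpa using (((hasDerivAt_id t).sub_const e).pow 2).div_const 2
  have hf'c : ContinuousOn f' (uIcc c d) := fun t ht =>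
    (hf'' t ht).continuousAt.continuousWithinAt
  rw [integral_mul_deriv_eq_deriv_mul hK hf'' ((continuous_sub_right e).intervalIntegrable c d)
      hint,
    integral_mul_deriv_eq_deriv_mul (fun t _ => (hasDerivAt_id' t).sub_const e) hf'
      (continuous_const.intervalIntegrable c d) hf'c.intervalIntegrable]
  simp only [one_mul]
  ring

theorem abs_integral_sub_sq_div_two_mul_le {p q s c d e M : ℝ} {F : ℝ → ℝ}
    (hpq : p.HolderConjugate q) (hs : 0 ≤ s) (hcd : c ≤ d)
    (hF : IntervalIntegrable F volume c d) (hconv : SConvexOn s (Icc c d) fun t => |F t| ^ q)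
    (hM : 0 ≤ M) (hker : ∫ t in c..d, ((t - e) ^ 2 / 2) ^ p = (d - c) * M ^ p / (2 * p + 1)) :
    |∫ t in c..d, (t - e) ^ 2 / 2 * F t|
      ≤ (d - c) * M * (|F c| ^ q + |F d| ^ q) ^ (1 / q)
        / ((2 * p + 1) ^ (1 / p) * (s + 1) ^ (1 / q)) := by
  have hq := hpq.symm.pos
  have hK : Continuous fun t : ℝ => ((t - e) ^ 2 / 2) ^ p := by
    have := hpq.nonneg
    fun_prop
  have hFq : IntervalIntegrable (fun t => |F t| ^ q) volume c d :=
    hconv.intervalIntegrable hs (fun t => by positivity) hcd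
      ((Real.continuous_rpow_const hq.le).comp_aestronglyMeasurable hF.1.aestronglyMeasurable.norm)
  calc |∫ t in c..d, (t - e) ^ 2 / 2 * F t|
      ≤ ∫ t in c..d, (t - e) ^ 2 / 2 * |F t| := by
        refine (abs_integral_le_integral_abs hcd).trans_eq (integral_congr fun t _ => ?_)
        rw [abs_mul, abs_of_nonneg (by positivity : (0 : ℝ) ≤ (t - e) ^ 2 / 2)]
    _ ≤ (∫ t in c..d, ((t - e) ^ 2 / 2) ^ p) ^ (1 / p) * (∫ t in c..d, |F t| ^ q) ^ (1 / q) :=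
        integral_mul_le_Lp_mul_Lq_of_nonneg hpq hcd (fun t => by positivity)
          (fun t => abs_nonneg _) (hK.intervalIntegrable c d) hFq
    _ ≤ ((d - c) * M ^ p / (2 * p + 1)) ^ (1 / p)
          * ((d - c) * (|F c| ^ q + |F d| ^ q) / (s + 1)) ^ (1 / q) := by
        rw [hker]
        refine mul_le_mul_of_nonneg_left (Real.rpow_le_rpow (integral_nonneg hcd fun t _ => by
          positivity) (hconv.integral_le hs hcd hFq) (by positivity)) (Real.rpow_nonneg ?_ _)
        exact div_nonneg (mul_nonneg (sub_nonneg.2 hcd) (by positivity)) (by linarith [hpq.pos])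
    _ = _ := hpq.mul_rpow_div_rpow_mul (sub_nonneg.2 hcd) hM (by positivity) (by linarith [hpq.pos])
          (by linarith)

theorem integral_sub_trapezoid_eq {a b x : ℝ} {f f' f'' : ℝ → ℝ}
    (hf' : ∀ t ∈ Icc a b, HasDerivAt f (f' t) t)
    (hf'' : ∀ t ∈ Icc a b, HasDerivAt f' (f'' t) t)
    (hint : IntervalIntegrable f'' volume a b) (hax : a ≤ x) (hxm : x ≤ (a + b) / 2)
    (hfx : f' x = f' (a + b - x)) :
    (∫ t in a..b, f t) - (b - a) / 2 * (f x + f (a + b - x))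
      = (∫ t in a..x, (t - a) ^ 2 / 2 * f'' t)
        + (∫ t in x..(a + b - x), (t - (a + b) / 2) ^ 2 / 2 * f'' t)
        + ∫ t in (a + b - x)..b, (t - b) ^ 2 / 2 * f'' t := by
  have hsub : ∀ {c d : ℝ}, a ≤ c → c ≤ d → d ≤ b → uIcc c d ⊆ Icc a b := fun hac hcd hdb =>
    uIcc_of_le hcd ▸ Icc_subset_Icc hac hdb
  have piece : ∀ {c d : ℝ} (e : ℝ), a ≤ c → c ≤ d → d ≤ b → _ := fun e hac hcd hdb =>
    integral_sub_sq_div_two_mul_eq (e := e) (fun t ht => hf' t (hsub hac hcd hdb ht))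
      (fun t ht => hf'' t (hsub hac hcd hdb ht))
      (hint.mono_set (uIcc_of_le (hac.trans hcd |>.trans hdb) ▸ hsub hac hcd hdb))
  have hfi : ∀ {c d : ℝ}, a ≤ c → c ≤ d → d ≤ b → IntervalIntegrable f volume c d :=
    fun hac hcd hdb => ContinuousOn.intervalIntegrable fun t ht =>
      (hf' t (hsub hac hcd hdb ht)).continuousAt.continuousWithinAt
  have hsplit := integral_add_adjacent_intervals (hfi (d := x) le_rfl hax (by linarith))
    (hfi hax (by linarith) (by linarith : a + b - x ≤ b))
  have hsplit' := integral_add_adjacent_intervals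
    (hfi (d := a + b - x) le_rfl (by linarith) (by linarith))
    (hfi (by linarith) (by linarith) le_rfl)
  rw [piece a le_rfl hax (by linarith), piece ((a + b) / 2) hax (by linarith) (by linarith),
    piece b (by linarith) (by linarith) le_rfl, hfx]
  linear_combination -hsplit - hsplit'

theorem stmt7_general (a b : ℝ) (hab : a < b) (f f' f'' : ℝ → ℝ)
    (hf' : ∀ t ∈ Set.Icc a b, HasDerivAt f (f' t) t)
    (hf'' : ∀ t ∈ Set.Icc a b, HasDerivAt f' (f'' t) t)
    (hint : IntervalIntegrable f'' volume a b)
    (s : ℝ) (hs0 : 0 < s)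
    (p q : ℝ) (hp : 1 < p) (hpq : 1 / p + 1 / q = 1)
    (hconv : SConvexOn s (Set.Icc a b) (fun t => |f'' t| ^ q)) :
    ∀ x ∈ Set.Icc a ((a + b) / 2), f' x = f' (a + b - x) →
      |((1 / (b - a)) * ∫ t in a..b, f t) - (1 / 2) * (f x + f (a + b - x))|
        ≤ 1 / (2 * (b - a) * (2 * p + 1) ^ (1 / p) * (s + 1) ^ (1 / q)) *
          ((x - a) ^ 3 * (|f'' a| ^ q + |f'' x| ^ q) ^ (1 / q)
            + (a + b - 2 * x) ^ 3 / 4 * (|f'' x| ^ q + |f'' (a + b - x)| ^ q) ^ (1 / q)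
            + (x - a) ^ 3 * (|f'' (a + b - x)| ^ q + |f'' b| ^ q) ^ (1 / q)) := by
  intro x ⟨hax, hxm⟩ hfx
  have hpq' : p.HolderConjugate q := Real.holderConjugate_iff.2 ⟨hp, by simpa [one_div] using hpq⟩
  have hba : 0 < b - a := sub_pos.2 hab
  have bound : ∀ {c d e M : ℝ}, a ≤ c → c ≤ d → d ≤ b → 0 ≤ M →
      ∫ t in c..d, ((t - e) ^ 2 / 2) ^ p = (d - c) * M ^ p / (2 * p + 1) →
      |∫ t in c..d, (t - e) ^ 2 / 2 * f'' t| ≤ (d - c) * M * (|f'' c| ^ q + |f'' d| ^ q) ^ (1 / q)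
        / ((2 * p + 1) ^ (1 / p) * (s + 1) ^ (1 / q)) := fun hac hcd hdb =>
    abs_integral_sub_sq_div_two_mul_le hpq' hs0.le hcd
      (hint.mono_set (by rw [uIcc_of_le hcd, uIcc_of_le hab.le]; exact Icc_subset_Icc hac hdb))
      (hconv.subset (Icc_subset_Icc hac hdb))
  have hp0 := hpq'.nonneg
  have B₁ := bound (c := a) (d := x) le_rfl hax (by linarith) (M := (x - a) ^ 2 / 2) (by positivity)
    (by rw [integral_sub_sq_div_two_rpow hp0 le_rfl hax]; simp)
  have B₂ := bound (c := x) (d := a + b - x) hax (by linarith) (by linarith) (e := (a + b) / 2)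
    (M := ((a + b) / 2 - x) ^ 2 / 2) (by positivity)
    (by rw [integral_sub_sq_div_two_rpow hp0 hxm (by linarith),
      show a + b - x - (a + b) / 2 = (a + b) / 2 - x by ring]; ring)
  have B₃ := bound (c := a + b - x) (d := b) (by linarith) (by linarith) le_rfl (e := b)
    (M := (b - (a + b - x)) ^ 2 / 2) (by positivity)
    (by rw [integral_sub_sq_div_two_rpow hp0 (by linarith) le_rfl]; simp)
  rw [show (1 / (b - a)) * (∫ t in a..b, f t) - 1 / 2 * (f x + f (a + b - x))
      = ((∫ t in a..b, f t) - (b - a) / 2 * (f x + f (a + b - x))) / (b - a) by field_simp,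
    integral_sub_trapezoid_eq hf' hf'' hint hax hxm hfx, abs_div, abs_of_pos hba, div_le_iff₀ hba]
  refine (abs_add_le _ _).trans ((add_le_add_left (abs_add_le _ _) _).trans ?_)
  convert add_le_add (add_le_add B₁ B₂) B₃ using 1
  field_simp
  ring

theorem stmt7 (a b : ℝ) (ha : 0 ≤ a) (hab : a < b) (f f' f'' : ℝ → ℝ)
    (hf' : ∀ t ∈ Set.Icc a b, HasDerivAt f (f' t) t)
    (hf'' : ∀ t ∈ Set.Icc a b, HasDerivAt f' (f'' t) t)
    (hint : IntervalIntegrable f'' volume a b)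
    (s : ℝ) (hs0 : 0 < s) (hs1 : s ≤ 1)
    (p q : ℝ) (hp : 1 < p) (hq : 1 < q) (hpq : 1 / p + 1 / q = 1)
    (hconv : SConvexOn s (Set.Icc a b) (fun t => |f'' t| ^ q)) :
    ∀ x ∈ Set.Icc a ((a + b) / 2), f' x = f' (a + b - x) →
      |((1 / (b - a)) * ∫ t in a..b, f t) - (1 / 2) * (f x + f (a + b - x))|
        ≤ 1 / (2 * (b - a) * (2 * p + 1) ^ (1 / p) * (s + 1) ^ (1 / q)) *
          ((x - a) ^ 3 * (|f'' a| ^ q + |f'' x| ^ q) ^ (1 / q)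
            + (a + b - 2 * x) ^ 3 / 4 * (|f'' x| ^ q + |f'' (a + b - x)| ^ q) ^ (1 / q)
            + (x - a) ^ 3 * (|f'' (a + b - x)| ^ q + |f'' b| ^ q) ^ (1 / q)) :=
  stmt7_general a b hab f f' f'' hf' hf'' hint s hs0 p q hp hpq hconv
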